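/- Let μ be a Borel probability measure on Ω absolutely continuous with respect to d-dimensional Lebesgue measure, let ν be a Borel probability measure on Ω, let u0 be a Kantorovich potential and T0 an optimal transport map for W1(μ,ν), and let η ≥ 0 satisfy η < essinf_μ |x − T0(x)| (the μ-essential infimum of x ↦ |x − T0(x)|). Then for μ-almost every x0 ∈ Ω, the minimization problem min_{x ∈ Ω} (½|x − x0|² + η·u0(x)) has a unique solution, given by x1 = x0 − η∇u0(x0). -/

import Mathlib

open MeasureTheory Set

noncomputable section

/-- The Wasserstein 1 distance between two Borel probability measures, defined as the
infimum of the transport cost over all couplings. -/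
def W1 {d : ℕ} (μ ν : Measure (EuclideanSpace ℝ (Fin d))) : ℝ :=
  sInf {c | ∃ γ : Measure (EuclideanSpace ℝ (Fin d) × EuclideanSpace ℝ (Fin d)),
    IsProbabilityMeasure γ ∧ γ.map Prod.fst = μ ∧ γ.map Prod.snd = ν ∧
    c = ∫ p, ‖p.1 - p.2‖ ∂γ}

/-- `u0` is a Kantorovich potential for `W1(μ, ν)`: it is 1-Lipschitz on Ω and achieves
the supremum in the dual problem. -/
def IsKantorovichPotential {d : ℕ} (Ω : Set (EuclideanSpace ℝ (Fin d)))
    (μ ν : Measure (EuclideanSpace ℝ (Fin d))) (u0 : EuclideanSpace ℝ (Fin d) → ℝ) : Prop :=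
  LipschitzOnWith 1 u0 Ω ∧
  ∀ u : EuclideanSpace ℝ (Fin d) → ℝ, LipschitzOnWith 1 u Ω →
    ∫ x, u x ∂μ - ∫ x, u x ∂ν ≤ ∫ x, u0 x ∂μ - ∫ x, u0 x ∂ν

/-- `T` is an optimal transport map for `W1(μ, ν)`: a Borel map from Ω to Ω pushing μ
forward to ν whose transport cost equals `W1 μ ν`. -/
def IsOptimalMap {d : ℕ} (Ω : Set (EuclideanSpace ℝ (Fin d)))
    (μ ν : Measure (EuclideanSpace ℝ (Fin d)))
    (T : EuclideanSpace ℝ (Fin d) → EuclideanSpace ℝ (Fin d)) : Prop :=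
  Measurable T ∧ MapsTo T Ω Ω ∧ μ.map T = ν ∧ ∫ x, ‖x - T x‖ ∂μ = W1 μ ν

/-!
Along a transport ray the potential drops at unit speed: for `μ`-a.e. `x₀`,
`u₀ x₀ - u₀ (T₀ x₀) = ‖x₀ - T₀ x₀‖`. This is Kantorovich duality for the cost `‖x - y‖`, proved by
Rockafellar's argument. The coupling `(id, T₀)₊μ` is optimal, so its support is cyclically
monotone (otherwise moving small pieces of mass around a violating cycle would lower the cost),
and a cyclically monotone set carries a 1-Lipschitz `φ` with `φ a - φ b ≥ ‖a - b‖` on it;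
comparing the dual values of `φ` and `u₀` forces the identity.

By Rademacher (`μ ≪ volume`) `u₀` is differentiable at a.e. `x₀`, and since it is affine with
slope `-1` on `[x₀, T₀ x₀]` its gradient `g` is the unit vector from `T₀ x₀` to `x₀`. Then
`x₀ - η • g` lies on that segment (`η < ‖x₀ - T₀ x₀‖`), where `u₀ = u₀ x₀ - η`. Writing
`s = ‖x - x₀‖`, the bound `u₀ x ≥ u₀ x₀ - s` gives `½ s² + η u₀ x ≥ ½ η² + η (u₀ x₀ - η)`, with
equality only if `s = η` and `u₀` drops at unit speed from `x₀` to `x`; the same derivative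
argument then gives `x₀ - x = η • g`.
-/

open MeasureTheory Set Metric Filter ProbabilityTheory
open scoped ENNReal NNReal Topology

section CyclicalMonotonicity

variable {X : Type*} [PseudoMetricSpace X]

def DistCyclicallyMonotone (S : Set (X × X)) : Prop :=
  ∀ (n : ℕ) (q : Fin (n + 1) → X × X), (∀ i, q i ∈ S) →
    ∑ i, dist (q i).1 (q i).2 ≤ ∑ i, dist (q (i + 1)).1 (q i).2

/-- Rockafellar's chain cost: starting from `q 0`, alternately pay `-dist (q i).1 (q i).2` and
jump from the target of `q i` to the source of the next pair, the last jump landing at `x`.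
Its infimum over chains in `S` starting at a fixed pair is the potential. -/
def chainCost (x : X) {n : ℕ} (q : Fin (n + 1) → X × X) : ℝ :=
  ∑ i : Fin n, (dist (q i.succ).1 (q i.castSucc).2 - dist (q i.castSucc).1 (q i.castSucc).2)
    + (dist x (q (Fin.last n)).2 - dist (q (Fin.last n)).1 (q (Fin.last n)).2)

lemma chainCost_le_add_dist (x y : X) {n : ℕ} (q : Fin (n + 1) → X × X) :
    chainCost x q ≤ chainCost y q + dist x y := by
  unfold chainCost
  linarith [dist_triangle x y (q (Fin.last n)).2, dist_comm x y]

lemma chainCost_snoc (p : X × X) {n : ℕ} (q : Fin (n + 1) → X × X) :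
    chainCost p.2 (Fin.snoc q p : Fin (n + 2) → X × X) = chainCost p.1 q - dist p.1 p.2 := by
  simp only [chainCost, Fin.sum_univ_castSucc (n := n), Fin.succ_castSucc, Fin.snoc_castSucc,
    Fin.succ_last, Fin.snoc_last, dist_self]
  ring

lemma DistCyclicallyMonotone.chainCost_nonneg {S : Set (X × X)} (hS : DistCyclicallyMonotone S)
    {n : ℕ} {q : Fin (n + 1) → X × X} (hq : ∀ i, q i ∈ S) : 0 ≤ chainCost (q 0).1 q := by
  have hcycle : chainCost (q 0).1 q =
      ∑ i, dist (q (i + 1)).1 (q i).2 - ∑ i, dist (q i).1 (q i).2 := by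
    rw [← Finset.sum_sub_distrib, Fin.sum_univ_castSucc, chainCost]
    simp [Fin.coeSucc_eq_succ, Fin.last_add_one]
  linarith [hS n q hq]

lemma DistCyclicallyMonotone.exists_lipschitzWith_potential {S : Set (X × X)}
    (hS : DistCyclicallyMonotone S) (hne : S.Nonempty) :
    ∃ φ : X → ℝ, LipschitzWith 1 φ ∧ ∀ p ∈ S, dist p.1 p.2 ≤ φ p.1 - φ p.2 := by
  obtain ⟨p₀, hp₀⟩ := hne
  let Chain := {c : Σ n, Fin (n + 1) → X × X // c.2 0 = p₀ ∧ ∀ i, c.2 i ∈ S}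
  have : Nonempty Chain := ⟨⟨⟨0, fun _ => p₀⟩, rfl, fun _ => hp₀⟩⟩
  have hbdd (x : X) : BddBelow (range fun c : Chain => chainCost x c.1.2) := by
    refine ⟨-dist x p₀.1, forall_mem_range.2 fun c => ?_⟩
    have h := hS.chainCost_nonneg c.2.2
    rw [c.2.1] at h
    linarith [chainCost_le_add_dist p₀.1 x c.1.2, dist_comm x p₀.1]
  refine ⟨fun x => ⨅ c : Chain, chainCost x c.1.2, ?_, ?_⟩
  · refine LipschitzWith.of_le_add fun x y => ?_
    have : (⨅ c : Chain, chainCost x c.1.2) - dist x y ≤ ⨅ c : Chain, chainCost y c.1.2 :=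
      le_ciInf fun c => by linarith [ciInf_le (hbdd x) c, chainCost_le_add_dist x y c.1.2]
    linarith
  · intro p hp
    have hle : (⨅ c : Chain, chainCost p.2 c.1.2) + dist p.1 p.2 ≤
        ⨅ c : Chain, chainCost p.1 c.1.2 := by
      refine le_ciInf fun c => ?_
      let c' : Chain := ⟨⟨_, Fin.snoc c.1.2 p⟩, by simpa [Fin.snoc] using c.2.1,
        Fin.lastCases (by simpa using hp) (fun i => by simpa using c.2.2 i)⟩
      linarith [ciInf_le (hbdd p.2) c', chainCost_snoc p c.1.2]
    linarith

end CyclicalMonotonicity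

section OptimalCoupling

lemma map_fst_sum_prod_cyclic {α β : Type*} [MeasurableSpace α] [MeasurableSpace β] {n : ℕ}
    (P : Fin (n + 1) → Measure (α × β)) [∀ i, IsProbabilityMeasure (P i)] :
    (∑ i, ((P (i + 1)).map Prod.fst).prod ((P i).map Prod.snd)).map Prod.fst =
      (∑ i, P i).map Prod.fst := by
  rw [Measure.map_finset_sum' measurable_fst.aemeasurable,
    Measure.map_finset_sum' measurable_fst.aemeasurable]
  simp only [Measure.map_fst_prod, Measure.map_apply measurable_snd MeasurableSet.univ,
    preimage_univ, measure_univ, one_smul]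
  exact Fintype.sum_equiv (Equiv.addRight 1) _ _ fun i => rfl

lemma map_snd_sum_prod_cyclic {α β : Type*} [MeasurableSpace α] [MeasurableSpace β] {n : ℕ}
    (P : Fin (n + 1) → Measure (α × β)) [∀ i, IsProbabilityMeasure (P i)] :
    (∑ i, ((P (i + 1)).map Prod.fst).prod ((P i).map Prod.snd)).map Prod.snd =
      (∑ i, P i).map Prod.snd := by
  rw [Measure.map_finset_sum' measurable_snd.aemeasurable,
    Measure.map_finset_sum' measurable_snd.aemeasurable]
  simp only [Measure.map_snd_prod, Measure.map_apply measurable_fst MeasurableSet.univ,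
    preimage_univ, measure_univ, one_smul]

lemma smul_cond_le_smul {α : Type*} [MeasurableSpace α] (γ : Measure α) (s : Set α)
    {c d : ℝ≥0∞} (hc : c ≤ d * γ s) : c • γ[|s] ≤ d • γ :=
  calc c • γ[|s] = (c / γ s) • γ.restrict s := by
        rw [ProbabilityTheory.cond, smul_smul, div_eq_mul_inv]
    _ ≤ d • γ.restrict s := by gcongr; exact ENNReal.div_le_of_le_mul hc
    _ ≤ d • γ := by gcongr; exact Measure.restrict_le_self

lemma exists_smul_sum_cond_le {α ι : Type*} [MeasurableSpace α] [Fintype ι] [Nonempty ι]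
    (γ : Measure α) [IsFiniteMeasure γ] (B : ι → Set α) (hB : ∀ i, γ (B i) ≠ 0) :
    ∃ c : ℝ≥0∞, c ≠ 0 ∧ c ≠ ∞ ∧ c • ∑ i, γ[|B i] ≤ γ := by
  set N : ℝ≥0∞ := (Fintype.card ι : ℝ≥0∞)
  obtain ⟨j, hj⟩ : ∃ j, N⁻¹ * γ (B j) = ⨅ i, N⁻¹ * γ (B i) :=
    exists_eq_ciInf_of_finite
  refine ⟨⨅ i, N⁻¹ * γ (B i), hj ▸ mul_ne_zero (by simp [N]) (hB j),
    hj ▸ ENNReal.mul_ne_top (by simp [N]) (measure_ne_top _ _), ?_⟩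
  calc (⨅ i, N⁻¹ * γ (B i)) • ∑ i, γ[|B i] = ∑ i, (⨅ i, N⁻¹ * γ (B i)) • γ[|B i] :=
        Finset.smul_sum
    _ ≤ ∑ _i : ι, N⁻¹ • γ := Finset.sum_le_sum fun i _ => smul_cond_le_smul _ _ (iInf_le _ i)
    _ = γ := by
      rw [Finset.sum_const, Finset.card_univ, ← Nat.cast_smul_eq_nsmul ℝ≥0∞, smul_smul,
        ENNReal.mul_inv_cancel (by simp) (by simp), one_smul]

variable {X : Type*} [PseudoMetricSpace X] [MeasurableSpace X]

def IsOptimalCoupling (γ : Measure (X × X)) : Prop :=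
  ∀ γ' : Measure (X × X), IsProbabilityMeasure γ' → γ'.map Prod.fst = γ.map Prod.fst →
    γ'.map Prod.snd = γ.map Prod.snd → ∫ p, dist p.1 p.2 ∂γ ≤ ∫ p, dist p.1 p.2 ∂γ'

lemma IsOptimalCoupling.sum_integral_le_sum_integral_prod {γ : Measure (X × X)}
    [IsProbabilityMeasure γ] (hγ : IsOptimalCoupling γ)
    (hint : Integrable (fun p => dist p.1 p.2) γ) {n : ℕ} (P : Fin (n + 1) → Measure (X × X))
    [∀ i, IsProbabilityMeasure (P i)] {c : ℝ≥0∞} (hc0 : c ≠ 0) (hctop : c ≠ ∞)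
    (hle : c • ∑ i, P i ≤ γ)
    (hQ : ∀ i, Integrable (fun p => dist p.1 p.2)
      (((P (i + 1)).map Prod.fst).prod ((P i).map Prod.snd))) :
    ∑ i, ∫ p, dist p.1 p.2 ∂(P i) ≤
      ∑ i, ∫ p, dist p.1 p.2 ∂(((P (i + 1)).map Prod.fst).prod ((P i).map Prod.snd)) := by
  set C : X × X → ℝ := fun p => dist p.1 p.2
  set Q := fun i => ((P (i + 1)).map Prod.fst).prod ((P i).map Prod.snd)
  set ρ := c • ∑ i, P i
  have : IsFiniteMeasure ρ := ⟨by simpa [ρ] using ENNReal.mul_lt_top hctop.lt_top (by simp)⟩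
  have hdecomp : γ - ρ + ρ = γ := Measure.sub_add_cancel_of_le hle
  have hPint (i) : Integrable C (P i) :=
    integrable_finsetSum_measure.1
      ((integrable_smul_measure hc0 hctop).1 (hint.mono_measure hle)) i (Finset.mem_univ i)
  have hrest : Integrable C (γ - ρ) := hint.mono_measure Measure.sub_le
  have hρ : Integrable C ρ := (integrable_smul_measure hc0 hctop).2
    (integrable_finsetSum_measure.2 fun i _ => hPint i)
  have hτ : Integrable C (c • ∑ i, Q i) := (integrable_smul_measure hc0 hctop).2
    (integrable_finsetSum_measure.2 fun i _ => hQ i)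
  -- The competitor replaces the pieces `P i` of `γ` by the products that pair the first
  -- marginal of `P (i + 1)` with the second marginal of `P i`.
  have hfst : (γ - ρ + c • ∑ i, Q i).map Prod.fst = γ.map Prod.fst := by
    conv_rhs => rw [← hdecomp]
    rw [Measure.map_add _ _ measurable_fst, Measure.map_add _ _ measurable_fst,
      Measure.map_smul, Measure.map_smul, map_fst_sum_prod_cyclic]
  have hsnd : (γ - ρ + c • ∑ i, Q i).map Prod.snd = γ.map Prod.snd := by
    conv_rhs => rw [← hdecomp]
    rw [Measure.map_add _ _ measurable_snd, Measure.map_add _ _ measurable_snd,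
      Measure.map_smul, Measure.map_smul, map_snd_sum_prod_cyclic]
  have hprob : IsProbabilityMeasure (γ - ρ + c • ∑ i, Q i) := by
    constructor
    simpa [Measure.map_apply measurable_fst MeasurableSet.univ] using
      congrArg (fun m => m univ) hfst
  have key := hγ _ hprob hfst hsnd
  have hγsplit : ∫ p, C p ∂γ = ∫ p, C p ∂(γ - ρ) + ∫ p, C p ∂ρ := by
    conv_lhs => rw [← hdecomp]
    exact integral_add_measure hrest hρ
  rw [hγsplit, integral_add_measure hrest hτ, integral_smul_measure, integral_smul_measure,
    integral_finsetSum_measure fun i _ => hPint i,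
    integral_finsetSum_measure fun i _ => hQ i] at key
  exact le_of_smul_le_smul_left (by linarith) (ENNReal.toReal_pos hc0 hctop)

lemma ae_mem_ball_prod_map_fst_map_snd [OpensMeasurableSpace X] {P P' : Measure (X × X)}
    [IsFiniteMeasure P] [IsFiniteMeasure P'] {a b : X × X} {δ : ℝ} (hP : ∀ᵐ p ∂P, p ∈ ball a δ)
    (hP' : ∀ᵐ p ∂P', p ∈ ball b δ) :
    ∀ᵐ p ∂(P.map Prod.fst).prod (P'.map Prod.snd), p ∈ ball (a.1, b.2) δ := by
  have h₁ : ∀ᵐ x ∂P.map Prod.fst, x ∈ ball a.1 δ :=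
    (ae_map_iff measurable_fst.aemeasurable measurableSet_ball).2 <| hP.mono fun p hp => by
      rw [← ball_prod_same] at hp; exact hp.1
  have h₂ : ∀ᵐ y ∂P'.map Prod.snd, y ∈ ball b.2 δ :=
    (ae_map_iff measurable_snd.aemeasurable measurableSet_ball).2 <| hP'.mono fun p hp => by
      rw [← ball_prod_same] at hp; exact hp.2
  filter_upwards [Measure.quasiMeasurePreserving_fst.ae h₁,
    Measure.quasiMeasurePreserving_snd.ae h₂] with p hp₁ hp₂
  rw [← ball_prod_same]
  exact ⟨hp₁, hp₂⟩

variable [OpensMeasurableSpace X] [SecondCountableTopology X]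

lemma integrable_dist_of_ae_mem_ball {P : Measure (X × X)} [IsFiniteMeasure P] {q : X × X}
    {δ : ℝ} (hP : ∀ᵐ p ∂P, p ∈ ball q δ) : Integrable (fun p => dist p.1 p.2) P :=
  Integrable.of_bound (by fun_prop) (dist q.1 q.2 + 2 * δ) <| hP.mono fun p hp => by
    rw [mem_ball, Prod.dist_eq, max_lt_iff] at hp
    rw [Real.norm_of_nonneg dist_nonneg]
    linarith [dist_triangle4 p.1 q.1 q.2 p.2, dist_comm p.2 q.2]

lemma integral_dist_mem_Icc_of_ae_mem_ball {P : Measure (X × X)} [IsProbabilityMeasure P]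
    {q : X × X} {δ : ℝ} (hP : ∀ᵐ p ∂P, p ∈ ball q δ) :
    ∫ p, dist p.1 p.2 ∂P ∈ Icc (dist q.1 q.2 - 2 * δ) (dist q.1 q.2 + 2 * δ) := by
  have hnear : ∀ᵐ p ∂P, dist p.1 p.2 ∈ Icc (dist q.1 q.2 - 2 * δ) (dist q.1 q.2 + 2 * δ) :=
    hP.mono fun p hp => by
      rw [mem_ball, Prod.dist_eq, max_lt_iff] at hp
      constructor <;>
      linarith [dist_triangle4 p.1 q.1 q.2 p.2, dist_triangle4 q.1 p.1 p.2 q.2,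
        dist_comm p.1 q.1, dist_comm p.2 q.2]
  have hint := integrable_dist_of_ae_mem_ball hP
  constructor
  · simpa using integral_mono_ae (integrable_const _) hint (hnear.mono fun p hp => hp.1)
  · simpa using integral_mono_ae hint (integrable_const _) (hnear.mono fun p hp => hp.2)

lemma IsOptimalCoupling.distCyclicallyMonotone_support {γ : Measure (X × X)}
    [IsProbabilityMeasure γ] (hγ : IsOptimalCoupling γ)
    (hint : Integrable (fun p => dist p.1 p.2) γ) :
    DistCyclicallyMonotone γ.support := by
  intro n q hq
  by_contra! hlt
  -- `δ` is an eighth of the cycle's gain per pair: the errors of size `2 * δ` made on each of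
  -- the `n + 1` pieces, on both sides, add up to half the gain.
  set δ := (∑ i, dist (q i).1 (q i).2 - ∑ i, dist (q (i + 1)).1 (q i).2) / (8 * (n + 1))
  have hδ : 0 < δ := div_pos (by linarith) (by positivity)
  have hB (i) : γ (ball (q i) δ) ≠ 0 := (nhds_basis_ball.mem_measureSupport.1 (hq i) δ hδ).ne'
  obtain ⟨c, hc0, hctop, hle⟩ := exists_smul_sum_cond_le γ _ hB
  set P := fun i => γ[|ball (q i) δ]
  have hPprob (i) : IsProbabilityMeasure (P i) := cond_isProbabilityMeasure (hB i)
  have hP (i) : ∀ᵐ p ∂P i, p ∈ ball (q i) δ := ae_cond_mem measurableSet_ball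
  have hQ (i) := ae_mem_ball_prod_map_fst_map_snd (hP (i + 1)) (hP i)
  have hfst (i) : IsProbabilityMeasure ((P i).map Prod.fst) :=
    Measure.isProbabilityMeasure_map measurable_fst.aemeasurable
  have hsnd (i) : IsProbabilityMeasure ((P i).map Prod.snd) :=
    Measure.isProbabilityMeasure_map measurable_snd.aemeasurable
  have hsum := hγ.sum_integral_le_sum_integral_prod hint P hc0 hctop hle
    fun i => integrable_dist_of_ae_mem_ball (hQ i)
  have hlow := Finset.sum_le_sum fun i (_ : i ∈ Finset.univ) =>
    (integral_dist_mem_Icc_of_ae_mem_ball (hP i)).1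
  have hup := Finset.sum_le_sum fun i (_ : i ∈ Finset.univ) =>
    (integral_dist_mem_Icc_of_ae_mem_ball (hQ i)).2
  simp only [Finset.sum_sub_distrib, Finset.sum_add_distrib, Finset.sum_const, Finset.card_univ,
    Fintype.card_fin, nsmul_eq_mul] at hlow hup
  have hδ' : (n + 1 : ℝ) * (2 * δ) =
      (∑ i, dist (q i).1 (q i).2 - ∑ i, dist (q (i + 1)).1 (q i).2) / 4 := by
    simp only [δ]; field_simp; ring
  push_cast at hlow hup
  linarith

end OptimalCoupling

section Segment

lemma LipschitzOnWith.sub_le_norm_sub {E : Type*} [SeminormedAddCommGroup E] {u : E → ℝ}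
    {Ω : Set E} (hu : LipschitzOnWith 1 u Ω) {x y : E} (hx : x ∈ Ω) (hy : y ∈ Ω) :
    u x - u y ≤ ‖x - y‖ := by
  have := hu.le_add_mul hx hy
  rw [NNReal.coe_one, one_mul, dist_eq_norm] at this
  linarith

variable {E : Type*} [NormedAddCommGroup E] [NormedSpace ℝ E]

lemma LipschitzOnWith.apply_add_smul_of_sub_eq_norm {u : E → ℝ} {Ω : Set E}
    (hu : LipschitzOnWith 1 u Ω) (hΩ : Convex ℝ Ω) {x z : E} (hx : x ∈ Ω) (hz : z ∈ Ω)
    (hxz : u x - u z = ‖x - z‖) {t : ℝ} (ht : t ∈ Icc (0 : ℝ) 1) :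
    x + t • (z - x) ∈ Ω ∧ u (x + t • (z - x)) = u x - t * ‖x - z‖ := by
  have hw := hΩ.add_smul_sub_mem hx hz ht
  have h₁ : ‖x - (x + t • (z - x))‖ = t * ‖x - z‖ := by
    rw [sub_add_cancel_left, norm_neg, norm_smul, Real.norm_of_nonneg ht.1, norm_sub_rev]
  have h₂ : ‖x + t • (z - x) - z‖ = (1 - t) * ‖x - z‖ := by
    rw [show x + t • (z - x) - z = (1 - t) • (x - z) by module, norm_smul,
      Real.norm_of_nonneg (sub_nonneg.2 ht.2)]
  refine ⟨hw, ?_⟩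
  linarith [hu.sub_le_norm_sub hx hw, hu.sub_le_norm_sub hw hz]

lemma HasFDerivAt.apply_eq_of_forall_add_smul {f : E → ℝ} {L : E →L[ℝ] ℝ} {x v : E} {c : ℝ}
    (hf : HasFDerivAt f L x) (hline : ∀ t ∈ Icc (0 : ℝ) 1, f (x + t • v) = f x + t * c) :
    L v = c := by
  have hcurve : HasDerivAt (fun t : ℝ => x + t • v) v 0 := by
    simpa using ((hasDerivAt_id (0 : ℝ)).smul_const v).const_add x
  have hf₀ : HasFDerivAt f L (x + (0 : ℝ) • v) := by simpa using hf
  have h₁ : HasDerivWithinAt (fun t : ℝ => f (x + t • v)) (L v) (Icc 0 1) 0 :=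
    (hf₀.comp_hasDerivAt (0 : ℝ) hcurve).hasDerivWithinAt
  have h₂ : HasDerivWithinAt (fun t : ℝ => f (x + t • v)) c (Icc 0 1) 0 :=
    ((hasDerivAt_mul_const c).const_add (f x)).hasDerivWithinAt.congr hline (by simp)
  exact (uniqueDiffOn_Icc zero_lt_one 0 ⟨le_rfl, zero_le_one⟩).eq_deriv _ h₁ h₂

end Segment

section Gradient

variable {F : Type*} [NormedAddCommGroup F] [InnerProductSpace ℝ F] [CompleteSpace F]

lemma LipschitzWith.norm_smul_gradient_eq_sub {u : F → ℝ} (hu : LipschitzWith 1 u) {Ω : Set F}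
    (hΩ : Convex ℝ Ω) {x₀ z g : F} (hx₀ : x₀ ∈ Ω) (hz : z ∈ Ω)
    (hxz : u x₀ - u z = ‖x₀ - z‖) (hg : HasGradientAt u g x₀) : ‖x₀ - z‖ • g = x₀ - z := by
  have hg₁ : ‖g‖ ≤ 1 := by
    simpa [HasGradientAt] using hg.hasFDerivAt.le_of_lipschitz hu
  have hinner : inner ℝ g (x₀ - z) = ‖x₀ - z‖ := by
    have := hg.hasFDerivAt.apply_eq_of_forall_add_smul (v := z - x₀) (c := -‖x₀ - z‖)
      fun t ht => by
        rw [(hu.lipschitzOnWith.apply_add_smul_of_sub_eq_norm hΩ hx₀ hz hxz ht).2]; ring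
    rw [InnerProductSpace.toDual_apply_apply] at this
    rw [← neg_sub z x₀, inner_neg_right, this, neg_neg, neg_sub]
  rcases eq_or_ne z x₀ with rfl | hne
  · simp
  have hpos : 0 < ‖x₀ - z‖ := norm_pos_iff.2 (sub_ne_zero.2 hne.symm)
  have hg_eq : ‖g‖ = 1 := by
    refine le_antisymm hg₁ (le_of_mul_le_mul_right ?_ hpos)
    rw [one_mul]
    exact hinner ▸ real_inner_le_norm g (x₀ - z)
  have := inner_eq_norm_mul_iff_real.1 (by rw [hinner, hg_eq, one_mul])
  rwa [hg_eq, one_smul] at this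

lemma LipschitzWith.sub_smul_gradient_mem_of_sub_eq_norm {u : F → ℝ} (hu : LipschitzWith 1 u)
    {Ω : Set F} (hΩ : Convex ℝ Ω) {x₀ y g : F} (hx₀ : x₀ ∈ Ω) (hy : y ∈ Ω)
    (hray : u x₀ - u y = ‖x₀ - y‖) (hg : HasGradientAt u g x₀) {η : ℝ} (hη : 0 ≤ η)
    (hηy : η < ‖x₀ - y‖) :
    ‖g‖ = 1 ∧ x₀ - η • g ∈ Ω ∧ u (x₀ - η • g) = u x₀ - η := by
  have hr : 0 < ‖x₀ - y‖ := hη.trans_lt hηy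
  have hgy := hu.norm_smul_gradient_eq_sub hΩ hx₀ hy hray hg
  have hg₁ : ‖g‖ = 1 := by
    have := congrArg norm hgy
    rw [norm_smul, norm_norm] at this
    exact (mul_eq_left₀ hr.ne').1 this
  have hx₁ : x₀ - η • g = x₀ + (η / ‖x₀ - y‖) • (y - x₀) := by
    rw [show η • g = (η / ‖x₀ - y‖) • (‖x₀ - y‖ • g) by
      rw [smul_smul, div_mul_cancel₀ _ hr.ne'], hgy]
    module
  obtain ⟨hmem, hval⟩ := hu.lipschitzOnWith.apply_add_smul_of_sub_eq_norm hΩ hx₀ hy hray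
    ⟨div_nonneg hη hr.le, (div_le_one hr).2 hηy.le⟩
  rw [div_mul_cancel₀ η hr.ne'] at hval
  exact ⟨hg₁, hx₁ ▸ hmem, hx₁ ▸ hval⟩

lemma LipschitzWith.unique_minimizer_of_sub_eq_norm {u : F → ℝ} (hu : LipschitzWith 1 u)
    {Ω : Set F} (hΩ : Convex ℝ Ω) {x₀ y g : F} (hx₀ : x₀ ∈ Ω) (hy : y ∈ Ω)
    (hray : u x₀ - u y = ‖x₀ - y‖) (hg : HasGradientAt u g x₀) {η : ℝ} (hη : 0 ≤ η)
    (hηy : η < ‖x₀ - y‖) :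
    x₀ - η • g ∈ Ω ∧ ∀ x ∈ Ω, x ≠ x₀ - η • g →
      1 / 2 * ‖x₀ - η • g - x₀‖ ^ 2 + η * u (x₀ - η • g) < 1 / 2 * ‖x - x₀‖ ^ 2 + η * u x := by
  obtain ⟨hg₁, hx₁, hux₁⟩ := hu.sub_smul_gradient_mem_of_sub_eq_norm hΩ hx₀ hy hray hg hη hηy
  have hnorm₁ : ‖x₀ - η • g - x₀‖ = η := by
    rw [sub_sub_cancel_left, norm_neg, norm_smul, hg₁, mul_one, Real.norm_of_nonneg hη]
  refine ⟨hx₁, fun x hx hne => ?_⟩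
  rw [hnorm₁, hux₁]
  by_contra! hle
  have hlip := hu.lipschitzOnWith.sub_le_norm_sub hx₀ hx
  rw [norm_sub_rev] at hlip
  have hs : ‖x - x₀‖ = η := by
    nlinarith [sq_nonneg (‖x - x₀‖ - η), mul_le_mul_of_nonneg_left hlip hη]
  apply hne
  rcases hη.eq_or_lt with rfl | hηpos
  · rw [zero_smul, sub_zero]
    exact sub_eq_zero.1 (norm_eq_zero.1 hs)
  · have hux : u x₀ - u x = ‖x₀ - x‖ := by
      rw [norm_sub_rev]
      nlinarith
    have hxg := hu.norm_smul_gradient_eq_sub hΩ hx₀ hx hux hg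
    rw [norm_sub_rev, hs] at hxg
    rw [hxg, sub_sub_cancel]

end Gradient

lemma ae_lt_of_lt_sSup_null {α : Type*} [MeasurableSpace α] {μ : Measure α} {f : α → ℝ}
    (hf : ∀ x, 0 ≤ f x) {η : ℝ} (hη : η < sSup {ℓ : ℝ | μ {x | f x < ℓ} = 0}) :
    ∀ᵐ x ∂μ, η < f x := by
  obtain ⟨ℓ, hℓ, hηℓ⟩ := exists_lt_of_lt_csSup ⟨0, by simp [(hf _).not_gt]⟩ hη
  exact measure_mono_null (fun x hx => lt_of_not_ge fun h => hx (hηℓ.trans_le h)) hℓ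

section ContinuousOnCompact

variable {α : Type*} [TopologicalSpace α] [T2Space α] [MeasurableSpace α] [OpensMeasurableSpace α]
  {μ : Measure α} [IsFiniteMeasure μ] {K : Set α}

lemma integrable_of_continuousOn_of_ae_mem (hK : IsCompact K) (hμK : ∀ᵐ x ∂μ, x ∈ K)
    {f : α → ℝ} (hf : ContinuousOn f K) : Integrable f μ := by
  rw [← Measure.restrict_eq_self_of_ae_mem hμK]
  exact hf.integrableOn_compact hK

lemma integral_sub_integral_map_eq (hK : IsCompact K) (hμK : ∀ᵐ x ∂μ, x ∈ K) {T : α → α}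
    (hT : Measurable T) (hTK : ∀ᵐ x ∂μ, T x ∈ K) {f : α → ℝ} (hf : ContinuousOn f K) :
    Integrable (fun x => f x - f (T x)) μ ∧
      ∫ x, f x ∂μ - ∫ x, f x ∂(μ.map T) = ∫ x, (f x - f (T x)) ∂μ := by
  have hfT : Integrable f (μ.map T) := integrable_of_continuousOn_of_ae_mem hK
    ((ae_map_iff hT.aemeasurable hK.isClosed.measurableSet).2 hTK) hf
  have hfμ : Integrable f μ := integrable_of_continuousOn_of_ae_mem hK hμK hf
  have hfTμ : Integrable (fun x => f (T x)) μ :=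
    (integrable_map_measure hfT.1 hT.aemeasurable).1 hfT
  exact ⟨hfμ.sub hfTμ, by rw [integral_sub hfμ hfTμ, integral_map hT.aemeasurable hfT.1]⟩

end ContinuousOnCompact

section OptimalMap

variable {d : ℕ} {Ω : Set (EuclideanSpace ℝ (Fin d))} {μ ν : Measure (EuclideanSpace ℝ (Fin d))}
  {T : EuclideanSpace ℝ (Fin d) → EuclideanSpace ℝ (Fin d)}

lemma IsOptimalMap.isOptimalCoupling (hT : IsOptimalMap Ω μ ν T) :
    IsOptimalCoupling (μ.map fun x => (x, T x)) := by
  obtain ⟨hTm, -, hmap, hcost⟩ := hT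
  have hpair : Measurable fun x => (x, T x) := measurable_id.prodMk hTm
  intro γ hγ hfst hsnd
  rw [Measure.map_map measurable_fst hpair] at hfst
  rw [Measure.map_map measurable_snd hpair] at hsnd
  simp_rw [dist_eq_norm]
  rw [integral_map hpair.aemeasurable (by fun_prop), hcost]
  refine csInf_le ⟨0, ?_⟩ ⟨γ, hγ, by simpa [Function.comp_def] using hfst, hsnd.trans hmap, rfl⟩
  rintro _ ⟨γ', -, -, -, rfl⟩
  exact integral_nonneg fun _ => norm_nonneg _

lemma IsOptimalMap.exists_lipschitzWith_ae_norm_le [IsProbabilityMeasure μ] (hΩ : IsCompact Ω)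
    (hμΩ : μ Ωᶜ = 0) (hT : IsOptimalMap Ω μ ν T) :
    ∃ φ : EuclideanSpace ℝ (Fin d) → ℝ, LipschitzWith 1 φ ∧
      ∀ᵐ x ∂μ, ‖x - T x‖ ≤ φ x - φ (T x) := by
  have hpair : Measurable fun x => (x, T x) := measurable_id.prodMk hT.1
  set γ := μ.map fun x => (x, T x)
  have : IsProbabilityMeasure γ := Measure.isProbabilityMeasure_map hpair.aemeasurable
  have hμ : ∀ᵐ x ∂μ, x ∈ Ω := mem_ae_iff.2 hμΩ
  have hγint : Integrable (fun p => dist p.1 p.2) γ :=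
    integrable_of_continuousOn_of_ae_mem (hΩ.prod hΩ)
      ((ae_map_iff hpair.aemeasurable (hΩ.prod hΩ).isClosed.measurableSet).2
        (hμ.mono fun x hx => ⟨hx, hT.2.1 hx⟩)) (by fun_prop)
  obtain ⟨φ, hφ, hφS⟩ := (hT.isOptimalCoupling.distCyclicallyMonotone_support
    hγint).exists_lipschitzWith_potential (Measure.nonempty_support (NeZero.ne γ))
  refine ⟨φ, hφ, ?_⟩
  filter_upwards [(ae_map_iff hpair.aemeasurable Measure.isClosed_support.measurableSet).1
    Measure.support_mem_ae] with x hx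
  simpa [dist_eq_norm] using hφS _ hx

lemma IsKantorovichPotential.ae_sub_apply_eq_norm [IsProbabilityMeasure μ] (hΩ : IsCompact Ω)
    (hμΩ : μ Ωᶜ = 0) {u : EuclideanSpace ℝ (Fin d) → ℝ} (hu : IsKantorovichPotential Ω μ ν u)
    (hT : IsOptimalMap Ω μ ν T) : ∀ᵐ x ∂μ, u x - u (T x) = ‖x - T x‖ := by
  obtain ⟨φ, hφ, hφT⟩ := hT.exists_lipschitzWith_ae_norm_le hΩ hμΩ
  obtain ⟨hTm, hTΩ, rfl, -⟩ := hT
  have hμ : ∀ᵐ x ∂μ, x ∈ Ω := mem_ae_iff.2 hμΩ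
  have hTμ : ∀ᵐ x ∂μ, T x ∈ Ω := hμ.mono fun x hx => hTΩ hx
  have hu' := integral_sub_integral_map_eq hΩ hμ hTm hTμ hu.1.continuousOn
  have hφ' := integral_sub_integral_map_eq hΩ hμ hTm hTμ hφ.continuous.continuousOn
  have hcost : Integrable (fun x => ‖x - T x‖) μ :=
    Integrable.of_bound (measurable_id.sub hTm).norm.aestronglyMeasurable (diam Ω) <|
      hμ.mono fun x hx => by
        rw [norm_norm, ← dist_eq_norm]
        exact dist_le_diam_of_mem hΩ.isBounded hx (hTΩ hx)
  have hle : (fun x => u x - u (T x)) ≤ᵐ[μ] fun x => ‖x - T x‖ :=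
    hμ.mono fun x hx => hu.1.sub_le_norm_sub hx (hTΩ hx)
  have hge : ∫ x, ‖x - T x‖ ∂μ ≤ ∫ x, (u x - u (T x)) ∂μ :=
    calc ∫ x, ‖x - T x‖ ∂μ ≤ ∫ x, (φ x - φ (T x)) ∂μ := integral_mono_ae hcost hφ'.1 hφT
      _ = ∫ x, φ x ∂μ - ∫ x, φ x ∂(μ.map T) := hφ'.2.symm
      _ ≤ ∫ x, u x ∂μ - ∫ x, u x ∂(μ.map T) := hu.2 φ hφ.lipschitzOnWith
      _ = ∫ x, (u x - u (T x)) ∂μ := hu'.2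
  exact (integral_eq_iff_of_ae_le hu'.1 hcost hle).1
    (le_antisymm (integral_mono_ae hu'.1 hcost hle) hge)

end OptimalMap

theorem stmt14_general {d : ℕ} (Ω : Set (EuclideanSpace ℝ (Fin d)))
    (hΩc : IsCompact Ω) (hΩv : Convex ℝ Ω)
    (μ ν : Measure (EuclideanSpace ℝ (Fin d)))
    [IsProbabilityMeasure μ]
    (hμΩ : μ Ωᶜ = 0) (hac : μ ≪ volume)
    (u0 : EuclideanSpace ℝ (Fin d) → ℝ) (hu0 : IsKantorovichPotential Ω μ ν u0)
    (T0 : EuclideanSpace ℝ (Fin d) → EuclideanSpace ℝ (Fin d))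
    (hT0 : IsOptimalMap Ω μ ν T0)
    (η : ℝ) (hη : 0 ≤ η)
    (hηess : η < sSup {ℓ : ℝ | μ {x | ‖x - T0 x‖ < ℓ} = 0}) :
    ∀ᵐ x0 ∂μ, ∃ g : EuclideanSpace ℝ (Fin d), HasGradientWithinAt u0 g Ω x0 ∧
      x0 - η • g ∈ Ω ∧
      ∀ x ∈ Ω, x ≠ x0 - η • g →
        (1 : ℝ) / 2 * ‖(x0 - η • g) - x0‖ ^ 2 + η * u0 (x0 - η • g) <
          (1 : ℝ) / 2 * ‖x - x0‖ ^ 2 + η * u0 x := by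
  obtain ⟨u, hu, hu0u⟩ := hu0.1.extend_real
  filter_upwards [mem_ae_iff.2 hμΩ, hac.ae_le hu.ae_differentiableAt,
    hu0.ae_sub_apply_eq_norm hΩc hμΩ hT0,
    ae_lt_of_lt_sSup_null (fun _ => norm_nonneg _) hηess] with x₀ hx₀ hdiff hray hηx₀
  have hy := hT0.2.1 hx₀
  rw [hu0u hx₀, hu0u hy] at hray
  obtain ⟨hx₁, hmin⟩ :=
    hu.unique_minimizer_of_sub_eq_norm hΩv hx₀ hy hray hdiff.hasGradientAt hη hηx₀
  refine ⟨gradient u x₀, HasGradientWithinAt.congr_of_mem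
    hdiff.hasGradientAt.hasFDerivAt.hasFDerivWithinAt hu0u hx₀, hx₁, fun x hx hne => ?_⟩
  rw [hu0u hx, hu0u hx₁]
  exact hmin x hx hne

theorem stmt14 {d : ℕ} (hd : 1 ≤ d) (Ω : Set (EuclideanSpace ℝ (Fin d)))
    (hΩc : IsCompact Ω) (hΩv : Convex ℝ Ω)
    (μ ν : Measure (EuclideanSpace ℝ (Fin d)))
    [IsProbabilityMeasure μ] [IsProbabilityMeasure ν]
    (hμΩ : μ Ωᶜ = 0) (hνΩ : ν Ωᶜ = 0) (hac : μ ≪ volume)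
    (u0 : EuclideanSpace ℝ (Fin d) → ℝ) (hu0 : IsKantorovichPotential Ω μ ν u0)
    (T0 : EuclideanSpace ℝ (Fin d) → EuclideanSpace ℝ (Fin d))
    (hT0 : IsOptimalMap Ω μ ν T0)
    (η : ℝ) (hη : 0 ≤ η)
    (hηess : η < sSup {ℓ : ℝ | μ {x | ‖x - T0 x‖ < ℓ} = 0}) :
    ∀ᵐ x0 ∂μ, ∃ g : EuclideanSpace ℝ (Fin d), HasGradientWithinAt u0 g Ω x0 ∧
      x0 - η • g ∈ Ω ∧
      ∀ x ∈ Ω, x ≠ x0 - η • g →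
        (1 : ℝ) / 2 * ‖(x0 - η • g) - x0‖ ^ 2 + η * u0 (x0 - η • g) <
          (1 : ℝ) / 2 * ‖x - x0‖ ^ 2 + η * u0 x :=
  stmt14_general Ω hΩc hΩv μ ν hμΩ hac u0 hu0 T0 hT0 η hη hηess
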